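/- Let Q be an n × n' matrix over a commutative ring whose (i,j) entry is Σ_{φ ∈ Φ_{i|j}} Π_{v ∈ V_φ} w(v), where Φ_{i|j} is the set of directed paths from source s_i to sink t_j in a planar network G with weighting w on vertices. Then for any I ⊆ [n], J ⊆ [n'] with |I| = |J|, the minor Δ_Q(I|J) equals Σ_{φ ∈ Φ_{I|J}} Π_{v ∈ V_φ} w(v), where Φ_{I|J} is the set of collections of pairwise vertex-disjoint directed paths from the sources {s_i : i ∈ I} to the sinks {t_j : j ∈ J} (Lindström's lemma). -/

import Mathlib

/-!
Expanding the determinant, and each entry of `Q` as a sum over paths, writes the minor as a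
signed sum over pairs `(σ, p)` of a permutation `σ` and a family of paths
`p i : s (α i) → t (β (σ i))`, weighted by the product of `w` over all vertices visited.
On the families in which two paths meet, exchanging the tails of two paths after a
canonically chosen common vertex changes `σ` by a transposition and keeps the multiset of
visited vertices, so these terms cancel in pairs. The surviving vertex-disjoint families
have `σ = 1` by planarity.
-/

/-- `p` is a directed path in the digraph with edge relation `E`,
starting at `a` and ending at `b` (given as its list of vertices). -/
def IsDirPath {V : Type*} (E : V → V → Prop) (a b : V) (p : List V) : Prop :=
  p ≠ [] ∧ p.Chain' E ∧ p.head? = some a ∧ p.getLast? = some b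

section Paths

variable {V : Type*} {E : V → V → Prop}

theorem IsDirPath.nodup (hacyc : ∀ v, ¬ Relation.TransGen E v v) {a b : V} {l : List V}
    (h : IsDirPath E a b l) : l.Nodup := by
  have : l.Pairwise (Relation.TransGen E) :=
    List.isChain_iff_pairwise.1 (h.2.1.imp fun _ _ => .single)
  exact this.imp fun {x _} hxy hxy' => by subst hxy'; exact hacyc x hxy

theorem finite_setOf_isDirPath [Fintype V] (hacyc : ∀ v, ¬ Relation.TransGen E v v) (a b : V) :
    {l | IsDirPath E a b l}.Finite :=
  (List.finite_length_le V (Fintype.card V)).subset fun _ hl => (hl.nodup hacyc).length_le_card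

theorem IsDirPath.append_of_head?_eq {a b c d : V} {x y z u : List V}
    (hxy : IsDirPath E a b (x ++ y)) (hzu : IsDirPath E c d (z ++ u))
    (hyu : y.head? = u.head?) (hu : u ≠ []) : IsDirPath E a d (x ++ u) := by
  obtain ⟨-, hcxy, hxy_head, -⟩ := hxy
  obtain ⟨-, hczu, -, hzu_last⟩ := hzu
  rw [List.Chain', List.isChain_append] at hcxy hczu
  have hu_last : u.getLast? = some (u.getLast hu) := List.getLast?_eq_some_getLast hu
  refine ⟨by simp [hu], ?_, ?_, ?_⟩
  · rw [List.Chain', List.isChain_append, ← hyu]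
    exact ⟨hcxy.1, hczu.2.1, hcxy.2.2⟩
  · rwa [List.head?_append, ← hyu, ← List.head?_append]
  · rwa [List.getLast?_append, hu_last, Option.some_or, ← Option.some_or (o := z.getLast?),
      ← hu_last, ← List.getLast?_append]

noncomputable def dirPaths [Fintype V] (hacyc : ∀ v, ¬ Relation.TransGen E v v) (a b : V) :
    Finset (List V) :=
  (finite_setOf_isDirPath hacyc a b).toFinset

@[simp]
theorem mem_dirPaths [Fintype V] {hacyc : ∀ v, ¬ Relation.TransGen E v v} {a b : V}
    {l : List V} :
    l ∈ dirPaths hacyc a b ↔ IsDirPath E a b l :=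
  Set.Finite.mem_toFinset _

theorem finsum_mem_setOf_isDirPath [Fintype V] {M : Type*} [AddCommMonoid M]
    (hacyc : ∀ v, ¬ Relation.TransGen E v v) (a b : V) (f : List V → M) :
    ∑ᶠ l ∈ {l | IsDirPath E a b l}, f l = ∑ l ∈ dirPaths hacyc a b, f l := by
  rw [← finsum_mem_coe_finset, dirPaths, Set.Finite.coe_toFinset]

end Paths

namespace List

variable {V : Type*}

theorem takeWhile_dropWhile_eq_nil (p : V → Bool) (l : List V) :
    (l.dropWhile p).takeWhile p = [] := by
  cases h : l.dropWhile p with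
  | nil => rfl
  | cons x xs =>
    have hx := head_dropWhile_not p (l := l) (by simp [h])
    simp only [h, head_cons] at hx
    simp [hx]

variable [DecidableEq V]

theorem takeWhile_bne_append_cons {v : V} {l₁ : List V} (hv : v ∉ l₁) (l₂ : List V) :
    (l₁ ++ v :: l₂).takeWhile (· != v) = l₁ := by
  rw [takeWhile_append_of_pos fun _ hu => bne_iff_ne.2 (ne_of_mem_of_not_mem hu hv)]
  simp

theorem dropWhile_bne_append_cons {v : V} {l₁ : List V} (hv : v ∉ l₁) (l₂ : List V) :
    (l₁ ++ v :: l₂).dropWhile (· != v) = v :: l₂ := by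
  rw [dropWhile_append_of_pos fun _ hu => bne_iff_ne.2 (ne_of_mem_of_not_mem hu hv)]
  simp

theorem head?_dropWhile_bne {v : V} {l : List V} (hv : v ∈ l) :
    (l.dropWhile (· != v)).head? = some v := by
  have hne : l.dropWhile (· != v) ≠ [] := fun h => by
    simpa using dropWhile_eq_nil_iff.1 h v hv
  have := head_dropWhile_not (· != v) hne
  simp_all [head?_eq_some_head hne]

def spliceAt (v : V) (l m : List V) : List V :=
  l.takeWhile (· != v) ++ m.dropWhile (· != v)

theorem spliceAt_spliceAt (v : V) (l m : List V) :
    spliceAt v (spliceAt v l m) (spliceAt v m l) = l := by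
  have hpos : ∀ n : List V, ∀ u ∈ n.takeWhile (· != v), (u != v) = true :=
    fun _ _ => mem_takeWhile_imp
  rw [spliceAt, spliceAt, spliceAt, takeWhile_append_of_pos (hpos l),
    dropWhile_append_of_pos (hpos m), takeWhile_dropWhile_eq_nil, dropWhile_idempotent,
    append_nil, takeWhile_append_dropWhile]

theorem prod_map_spliceAt_mul {M : Type*} [CommMonoid M] (f : V → M) (v : V) (l m : List V) :
    ((spliceAt v l m).map f).prod * ((spliceAt v m l).map f).prod =
      (l.map f).prod * (m.map f).prod := by
  conv_rhs => rw [← takeWhile_append_dropWhile (p := (· != v)) (l := l),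
    ← takeWhile_append_dropWhile (p := (· != v)) (l := m)]
  simp only [spliceAt, map_append, prod_append]
  ac_rfl

theorem mem_spliceAt {v u : V} {l m : List V} (hu : u ∈ spliceAt v l m) : u ∈ l ∨ u ∈ m :=
  (mem_append.1 hu).imp (fun h => (takeWhile_prefix _).subset h)
    (fun h => (dropWhile_suffix _).subset h)

end List

theorem IsDirPath.spliceAt {V : Type*} [DecidableEq V] {E : V → V → Prop} {a b c d v : V}
    {l m : List V} (hl : IsDirPath E a b l) (hm : IsDirPath E c d m) (hvl : v ∈ l)
    (hvm : v ∈ m) :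
    IsDirPath E a d (l.spliceAt v m) := by
  rw [← List.takeWhile_append_dropWhile (p := (· != v)) (l := l)] at hl
  rw [← List.takeWhile_append_dropWhile (p := (· != v)) (l := m)] at hm
  refine hl.append_of_head?_eq hm ?_ ?_
  · rw [List.head?_dropWhile_bne hvl, List.head?_dropWhile_bne hvm]
  · intro h
    simpa [h] using List.head?_dropWhile_bne hvm

namespace PathFamily

open Equiv Finset

variable {V : Type*} {k : ℕ}

section Crossing

variable [DecidableEq V]

def swapTailsAt (p : Fin k → List V) (i j : Fin k) (v : V) : Fin k → List V :=
  Function.update (Function.update p i ((p i).spliceAt v (p j))) j ((p j).spliceAt v (p i))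

def OnOtherPath (p : Fin k → List V) (i : Fin k) (u : V) : Prop := ∃ j ≠ i, u ∈ p j

instance (p : Fin k → List V) (i : Fin k) : DecidablePred (OnOtherPath p i) :=
  fun _ => inferInstanceAs (Decidable (∃ j, j ≠ i ∧ _))

section swapTailsAt

variable {p : Fin k → List V} {i j l : Fin k} {v : V}

theorem swapTailsAt_apply_left (hij : i ≠ j) :
    swapTailsAt p i j v i = (p i).spliceAt v (p j) := by
  rw [swapTailsAt, Function.update_of_ne hij, Function.update_self]

theorem swapTailsAt_apply_right : swapTailsAt p i j v j = (p j).spliceAt v (p i) := by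
  rw [swapTailsAt, Function.update_self]

theorem swapTailsAt_apply_of_ne (hi : l ≠ i) (hj : l ≠ j) : swapTailsAt p i j v l = p l := by
  rw [swapTailsAt, Function.update_of_ne hj, Function.update_of_ne hi]

theorem mem_swapTailsAt {u : V} (hu : u ∈ swapTailsAt p i j v l) :
    u ∈ p l ∨ u ∈ p i ∨ u ∈ p j := by
  by_cases hj : l = j
  · subst hj
    rw [swapTailsAt_apply_right] at hu
    exact (List.mem_spliceAt hu).elim .inl (.inr ∘ .inl)
  by_cases hi : l = i
  · subst hi
    rw [swapTailsAt_apply_left hj] at hu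
    exact (List.mem_spliceAt hu).elim .inl (.inr ∘ .inr)
  · rw [swapTailsAt_apply_of_ne hi hj] at hu
    exact .inl hu

theorem swapTailsAt_swapTailsAt (hij : i ≠ j) : swapTailsAt (swapTailsAt p i j v) i j v = p := by
  funext l
  by_cases hj : l = j
  · subst hj
    rw [swapTailsAt_apply_right, swapTailsAt_apply_right, swapTailsAt_apply_left hij,
      List.spliceAt_spliceAt]
  by_cases hi : l = i
  · subst hi
    rw [swapTailsAt_apply_left hij, swapTailsAt_apply_right, swapTailsAt_apply_left hij,
      List.spliceAt_spliceAt]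
  · rw [swapTailsAt_apply_of_ne hi hj, swapTailsAt_apply_of_ne hi hj]

theorem prod_swapTailsAt {M : Type*} [CommMonoid M] (f : V → M) (hij : i ≠ j) :
    ∏ l, ((swapTailsAt p i j v l).map f).prod = ∏ l, ((p l).map f).prod := by
  have hsub : ({i, j} : Finset (Fin k)) ⊆ univ := subset_univ _
  rw [← prod_sdiff hsub, ← prod_sdiff hsub, prod_pair hij, prod_pair hij,
    swapTailsAt_apply_left hij, swapTailsAt_apply_right, List.prod_map_spliceAt_mul]
  congr 1
  refine prod_congr rfl fun l hl => ?_
  simp only [mem_sdiff, mem_insert, mem_singleton, not_or] at hl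
  rw [swapTailsAt_apply_of_ne hl.2.1 hl.2.2]

theorem isDirPath_swapTailsAt {E : V → V → Prop} {a b : Fin k → V} {σ : Perm (Fin k)}
    (hp : ∀ l, IsDirPath E (a l) (b (σ l)) (p l)) (hij : i ≠ j) (hvi : v ∈ p i)
    (hvj : v ∈ p j) :
    ∀ l, IsDirPath E (a l) (b ((σ * swap i j) l)) (swapTailsAt p i j v l) := by
  intro l
  by_cases hj : l = j
  · subst hj
    simpa [swapTailsAt_apply_right] using (hp l).spliceAt (hp i) hvj hvi
  by_cases hi : l = i
  · subst hi
    simpa [swapTailsAt_apply_left hj] using (hp l).spliceAt (hp j) hvi hvj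
  · simpa [swapTailsAt_apply_of_ne hi hj, swap_apply_of_ne_of_ne hi hj] using hp l

theorem onOtherPath_of_swapTailsAt {l : Fin k} {u : V} (hu : OnOtherPath (swapTailsAt p i j v) l u)
    (hi : l ≠ i) (hj : l ≠ j) : OnOtherPath p l u := by
  obtain ⟨l', hl', hu⟩ := hu
  rcases mem_swapTailsAt hu with hu | hu | hu
  exacts [⟨l', hl', hu⟩, ⟨i, hi.symm, hu⟩, ⟨j, hj.symm, hu⟩]

end swapTailsAt

/-- The usual choice of crossing for the tail-swapping involution: swapping tails there does not
change it (`IsFirstCrossing.swapTailsAt`). -/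
structure IsFirstCrossing (p : Fin k → List V) (i : Fin k) (v : V) (j : Fin k) : Prop where
  min_index : ∀ i', (∃ u ∈ p i', OnOtherPath p i' u) → i ≤ i'
  find?_eq : (p i).find? (fun u => decide (OnOtherPath p i u)) = some v
  ne : j ≠ i
  mem : v ∈ p j
  min_partner : ∀ j', j' ≠ i → v ∈ p j' → j ≤ j'

namespace IsFirstCrossing

variable {p : Fin k → List V} {i j : Fin k} {v : V}

theorem mem_left (h : IsFirstCrossing p i v j) : v ∈ p i :=
  List.mem_of_find?_eq_some h.find?_eq

theorem lt (h : IsFirstCrossing p i v j) : i < j :=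
  (h.min_index j ⟨v, h.mem, i, h.ne.symm, h.mem_left⟩).lt_of_ne h.ne.symm

theorem not_pairwise_disjoint (h : IsFirstCrossing p i v j) :
    ¬ Pairwise fun l l' => (p l).Disjoint (p l') :=
  fun hd => hd h.ne.symm h.mem_left h.mem

theorem unique {i' j' : Fin k} {v' : V} (h : IsFirstCrossing p i v j)
    (h' : IsFirstCrossing p i' v' j') : i = i' ∧ v = v' ∧ j = j' := by
  obtain rfl : i = i' := le_antisymm (h.min_index i' ⟨v', h'.mem_left, j', h'.ne, h'.mem⟩)
    (h'.min_index i ⟨v, h.mem_left, j, h.ne, h.mem⟩)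
  obtain rfl : v = v' := Option.some_injective _ (h.find?_eq.symm.trans h'.find?_eq)
  exact ⟨rfl, rfl, le_antisymm (h.min_partner j' h'.ne h'.mem) (h'.min_partner j h.ne h.mem)⟩

theorem swapTailsAt (h : IsFirstCrossing p i v j) (hnd : (p i).Nodup) :
    IsFirstCrossing (swapTailsAt p i j v) i v j := by
  obtain ⟨-, as, bs, hpi, has⟩ := List.find?_eq_some_iff_append.1 h.find?_eq
  have has' : ∀ u ∈ as, ¬ OnOtherPath p i u := by simpa using has
  have hv_as : v ∉ as := fun hv => has' v hv ⟨j, h.ne, h.mem⟩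
  obtain ⟨ms, hpj⟩ : ∃ ms, (p j).dropWhile (· != v) = v :: ms := by
    have := List.head?_dropWhile_bne h.mem
    cases hd : (p j).dropWhile (· != v) <;> simp_all
  have hqi : PathFamily.swapTailsAt p i j v i = as ++ v :: ms := by
    rw [swapTailsAt_apply_left h.ne.symm, List.spliceAt, hpi, List.takeWhile_bne_append_cons hv_as,
      hpj]
  have hqj : PathFamily.swapTailsAt p i j v j = (p j).takeWhile (· != v) ++ v :: bs := by
    rw [swapTailsAt_apply_right, List.spliceAt, hpi, List.dropWhile_bne_append_cons hv_as]
  have hvqj : v ∈ PathFamily.swapTailsAt p i j v j := by simp [hqj]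
  refine ⟨?_, ?_, h.ne, hvqj, ?_⟩
  · rintro i' ⟨u, hu, hu_other⟩
    by_contra! hi'
    have hi'j := hi'.trans h.lt
    rw [swapTailsAt_apply_of_ne hi'.ne hi'j.ne] at hu
    exact hi'.not_ge
      (h.min_index i' ⟨u, hu, onOtherPath_of_swapTailsAt hu_other hi'.ne hi'j.ne⟩)
  · rw [hqi, List.find?_eq_some_iff_append]
    refine ⟨by simpa using ⟨j, h.ne, hvqj⟩, as, ms, rfl, fun u hu => ?_⟩
    simp only [Bool.not_eq_eq_eq_not, Bool.not_true, decide_eq_false_iff_not]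
    rintro ⟨j', hj', huj'⟩
    by_cases hj'j : j' = j
    · subst hj'j
      rw [hqj] at huj'
      rcases List.mem_append.1 huj' with hu' | hu'
      · exact has' u hu ⟨j', hj', (List.takeWhile_prefix _).subset hu'⟩
      · -- `u` precedes `v` on the path `p i`, so it cannot also follow it
        exact List.disjoint_of_nodup_append (hpi ▸ hnd) hu hu'
    · rw [swapTailsAt_apply_of_ne hj' hj'j] at huj'
      exact has' u hu ⟨j', hj', huj'⟩
  · intro j' hj' hv'
    by_cases hj'j : j' = j
    · exact hj'j.ge
    · rw [swapTailsAt_apply_of_ne hj' hj'j] at hv'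
      exact h.min_partner j' hj' hv'

end IsFirstCrossing

theorem exists_isFirstCrossing {p : Fin k → List V}
    (hp : ¬ Pairwise fun l l' => (p l).Disjoint (p l')) : ∃ i v j, IsFirstCrossing p i v j := by
  obtain ⟨i, hi, hi_min⟩ :=
    exists_min_image (univ.filter fun i => ∃ u ∈ p i, OnOtherPath p i u) id (by
      simp only [Pairwise, List.Disjoint, not_forall] at hp
      obtain ⟨i, j, hij, u, hui, huj, -⟩ := hp
      exact ⟨i, mem_filter.2 ⟨mem_univ _, u, hui, j, hij.symm, huj⟩⟩)
  obtain ⟨v, hv⟩ := Option.isSome_iff_exists.1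
    (List.find?_isSome (p := fun u => decide (OnOtherPath p i u)).2
      (by simpa using (mem_filter.1 hi).2))
  have hv_other : OnOtherPath p i v := by simpa using List.find?_some hv
  obtain ⟨j, hj, hj_min⟩ := exists_min_image (univ.filter fun j => j ≠ i ∧ v ∈ p j) id
    (by obtain ⟨j, hj⟩ := hv_other; exact ⟨j, by simpa using hj⟩)
  simp only [mem_filter, mem_univ, true_and, id] at hi_min hj hj_min
  exact ⟨i, v, j, hi_min, hv, hj.1, hj.2, fun j' h₁ h₂ => hj_min j' ⟨h₁, h₂⟩⟩

end Crossing

section Determinant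

variable [Fintype V] {E : V → V → Prop} {R : Type*} [CommRing R]

noncomputable def pathFamilies (hacyc : ∀ v, ¬ Relation.TransGen E v v) (a b : Fin k → V)
    (σ : Perm (Fin k)) : Finset (Fin k → List V) :=
  Fintype.piFinset fun i => dirPaths hacyc (a i) (b (σ i))

theorem mem_pathFamilies {hacyc : ∀ v, ¬ Relation.TransGen E v v} {a b : Fin k → V}
    {σ : Perm (Fin k)} {p : Fin k → List V} :
    p ∈ pathFamilies hacyc a b σ ↔ ∀ i, IsDirPath E (a i) (b (σ i)) (p i) := by
  simp [pathFamilies]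

theorem det_eq_sum_pathFamilies (hacyc : ∀ v, ¬ Relation.TransGen E v v) (a b : Fin k → V)
    (w : V → R) (M : Matrix (Fin k) (Fin k) R)
    (hM : ∀ i j, M i j = ∑ l ∈ dirPaths hacyc (a i) (b j), (l.map w).prod) :
    M.det = ∑ σ : Perm (Fin k), ∑ p ∈ pathFamilies hacyc a b σ,
      ((Perm.sign σ : ℤ) : R) * ∏ i, ((p i).map w).prod := by
  rw [← Matrix.det_transpose, Matrix.det_apply']
  refine sum_congr rfl fun σ _ => ?_
  simp only [Matrix.transpose_apply, hM, prod_univ_sum, mul_sum, pathFamilies]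

variable [DecidableEq V]

open scoped Classical in
theorem sum_pathFamilies_not_pairwise_disjoint_eq_zero (hacyc : ∀ v, ¬ Relation.TransGen E v v)
    (a b : Fin k → V) (w : V → R) :
    ∑ σ : Perm (Fin k), ∑ p ∈ pathFamilies hacyc a b σ with
        ¬ Pairwise fun i j => (p i).Disjoint (p j),
      ((Perm.sign σ : ℤ) : R) * ∏ i, ((p i).map w).prod = 0 := by
  rw [sum_sigma']
  set S := univ.sigma fun σ => {p ∈ pathFamilies hacyc a b σ |
    ¬ Pairwise fun i j => (p i).Disjoint (p j)}
  have hcross : ∀ x ∈ S, ∃ i v j, IsFirstCrossing x.2 i v j :=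
    fun x hx => exists_isFirstCrossing (mem_filter.1 (mem_sigma.1 hx).2).2
  choose i v j hc using hcross
  have hpaths : ∀ x ∈ S, ∀ l, IsDirPath E (a l) (b (x.1 l)) (x.2 l) := fun x hx =>
    mem_pathFamilies.1 (mem_filter.1 (mem_sigma.1 hx).2).1
  have hc' : ∀ x hx, IsFirstCrossing (swapTailsAt x.2 (i x hx) (j x hx) (v x hx))
      (i x hx) (v x hx) (j x hx) :=
    fun x hx => (hc x hx).swapTailsAt ((hpaths x hx _).nodup hacyc)
  let g : ∀ x ∈ S, Σ _ : Perm (Fin k), Fin k → List V := fun x hx =>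
    ⟨x.1 * swap (i x hx) (j x hx), swapTailsAt x.2 (i x hx) (j x hx) (v x hx)⟩
  have hg_mem : ∀ x hx, g x hx ∈ S := fun x hx => by
    simp only [g, S, mem_sigma, mem_univ, true_and, mem_filter, mem_pathFamilies]
    exact ⟨isDirPath_swapTailsAt (hpaths x hx) (hc x hx).ne.symm (hc x hx).mem_left (hc x hx).mem,
      (hc' x hx).not_pairwise_disjoint⟩
  refine sum_involution g (fun x hx => ?_) (fun x hx _ hfix => ?_) hg_mem (fun x hx => ?_)
  · simp only [g, prod_swapTailsAt w (hc x hx).ne.symm, Perm.sign_mul,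
      Perm.sign_swap (hc x hx).ne.symm]
    push_cast
    ring
  · have := congrArg Sigma.fst hfix
    simp [g, swap_eq_one_iff, (hc x hx).ne.symm] at this
  · obtain ⟨hi, hv, hj⟩ := (hc (g x hx) (hg_mem x hx)).unique (hc' x hx)
    simp only [g] at hi hv hj ⊢
    rw [hi, hv, hj]
    exact Sigma.ext (by simp) (heq_of_eq (swapTailsAt_swapTailsAt (hc x hx).ne.symm))

open scoped Classical in
theorem det_eq_sum_disjoint_pathFamilies (hacyc : ∀ v, ¬ Relation.TransGen E v v)
    (a b : Fin k → V) (w : V → R) (M : Matrix (Fin k) (Fin k) R)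
    (hM : ∀ i j, M i j = ∑ l ∈ dirPaths hacyc (a i) (b j), (l.map w).prod) :
    M.det = ∑ σ : Perm (Fin k), ∑ p ∈ pathFamilies hacyc a b σ with
        Pairwise fun i j => (p i).Disjoint (p j),
      ((Perm.sign σ : ℤ) : R) * ∏ i, ((p i).map w).prod := by
  calc M.det
      = ∑ σ : Perm (Fin k), ∑ p ∈ pathFamilies hacyc a b σ,
          ((Perm.sign σ : ℤ) : R) * ∏ i, ((p i).map w).prod :=
        det_eq_sum_pathFamilies hacyc a b w M hM
    _ = _ := sum_congr rfl fun σ _ => (sum_filter_add_sum_filter_not _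
          (fun p : Fin k → List V => Pairwise fun i j => (p i).Disjoint (p j)) _).symm
    _ = _ := by rw [sum_add_distrib, sum_pathFamilies_not_pairwise_disjoint_eq_zero, add_zero]

end Determinant

end PathFamily

theorem stmt_9_general {V : Type} [Fintype V] {R : Type} [CommRing R]
    (E : V → V → Prop)
    -- the digraph is acyclic
    (hacyc : ∀ v : V, ¬ Relation.TransGen E v v)
    {n n' : ℕ} (s : Fin n → V) (t : Fin n' → V) (w : V → R)
    -- planarity (in the form used: any family of pairwise vertex-disjoint directed
    -- paths from the sources indexed by `I` to the sinks indexed by `J` must connect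
    -- them in the order-preserving way)
    (hplanar : ∀ (k : ℕ) (α : Fin k → Fin n) (β : Fin k → Fin n'),
      StrictMono α → StrictMono β →
      ∀ (σ : Equiv.Perm (Fin k)) (p : Fin k → List V),
        (∀ i, IsDirPath E (s (α i)) (t (β (σ i))) (p i)) →
        (∀ i j, i ≠ j → ∀ v, v ∈ p i → v ∉ p j) → σ = 1)
    (Q : Matrix (Fin n) (Fin n') R)
    (hQ : ∀ i j, Q i j = ∑ᶠ p ∈ {p : List V | IsDirPath E (s i) (t j) p}, (p.map w).prod)
    (k : ℕ) (α : Fin k → Fin n) (β : Fin k → Fin n')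
    (hα : StrictMono α) (hβ : StrictMono β) :
    (Q.submatrix α β).det =
      ∑ᶠ p ∈ {p : Fin k → List V |
          (∀ i, IsDirPath E (s (α i)) (t (β i)) (p i)) ∧
          (∀ i j, i ≠ j → ∀ v, v ∈ p i → v ∉ p j)},
        ∏ i, ((p i).map w).prod := by
  classical
  rw [PathFamily.det_eq_sum_disjoint_pathFamilies hacyc (s ∘ α) (t ∘ β) w (Q.submatrix α β)
    fun i j => (hQ (α i) (β j)).trans (finsum_mem_setOf_isDirPath hacyc _ _ _)]
  rw [Finset.sum_eq_single 1 (fun σ _ hσ => Finset.sum_eq_zero fun p hp => ?_) (by simp),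
    ← finsum_mem_coe_finset]
  · have hset : ↑{p ∈ PathFamily.pathFamilies hacyc (s ∘ α) (t ∘ β) 1 |
        Pairwise fun i j => (p i).Disjoint (p j)} = {p : Fin k → List V |
          (∀ i, IsDirPath E (s (α i)) (t (β i)) (p i)) ∧
          (∀ i j, i ≠ j → ∀ v, v ∈ p i → v ∉ p j)} := by
      ext p
      simp [PathFamily.mem_pathFamilies, Pairwise, List.Disjoint]
    simp only [hset, Equiv.Perm.sign_one, Units.val_one, Int.cast_one, one_mul]
  · rw [Finset.mem_filter, PathFamily.mem_pathFamilies] at hp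
    exact (hσ (hplanar k α β hα hβ σ p hp.1 hp.2)).elim

/-- Lindström's lemma. -/
theorem stmt_9 {V : Type} [Fintype V] [DecidableEq V] {R : Type} [CommRing R]
    (E : V → V → Prop)
    -- the digraph is acyclic
    (hacyc : ∀ v : V, ¬ Relation.TransGen E v v)
    {n n' : ℕ} (s : Fin n → V) (t : Fin n' → V) (w : V → R)
    -- planarity (in the form used: any family of pairwise vertex-disjoint directed
    -- paths from the sources indexed by `I` to the sinks indexed by `J` must connect
    -- them in the order-preserving way)
    (hplanar : ∀ (k : ℕ) (α : Fin k → Fin n) (β : Fin k → Fin n'),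
      StrictMono α → StrictMono β →
      ∀ (σ : Equiv.Perm (Fin k)) (p : Fin k → List V),
        (∀ i, IsDirPath E (s (α i)) (t (β (σ i))) (p i)) →
        (∀ i j, i ≠ j → ∀ v, v ∈ p i → v ∉ p j) → σ = 1)
    (Q : Matrix (Fin n) (Fin n') R)
    (hQ : ∀ i j, Q i j = ∑ᶠ p ∈ {p : List V | IsDirPath E (s i) (t j) p}, (p.map w).prod)
    (k : ℕ) (α : Fin k → Fin n) (β : Fin k → Fin n')
    (hα : StrictMono α) (hβ : StrictMono β) :
    (Q.submatrix α β).det =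
      ∑ᶠ p ∈ {p : Fin k → List V |
          (∀ i, IsDirPath E (s (α i)) (t (β i)) (p i)) ∧
          (∀ i j, i ≠ j → ∀ v, v ∈ p i → v ∉ p j)},
        ∏ i, ((p i).map w).prod :=
  stmt_9_general E hacyc s t w hplanar Q hQ k α β hα hβ
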